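/- arXiv:1902.06253 — 5 statements merged into one kernel-verified Lean document; each statement's English description precedes it below -/
import Mathlib

section
/- Let L be a regular language given by a DFA M = (Q, Σ, δ, {s}, F), and suppose L = L₁ · L₂ for languages L₁, L₂. Let P = {q ∈ Q | ∃w ∈ L₁, δ(s,w) = q}. Then L₁ ⊆ L₁(P), L₂ ⊆ L₂(P), and L = L₁(P) · L₂(P). -/
/-- `L₁(P) = {w | δ(s,w) ∈ P}`. -/
def langOne {α σ : Type*} (M : DFA α σ) (P : Set σ) : Language α :=
  {w | M.eval w ∈ P}

/-- `L₂(P) = ⋂_{p ∈ P} {w | δ(p,w) ∈ F}`. -/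
def langTwo {α σ : Type*} (M : DFA α σ) (P : Set σ) : Language α :=
  {w | ∀ p ∈ P, M.evalFrom p w ∈ M.accept}

namespace DFA

variable {α σ : Type*} (M : DFA α σ)

theorem append_mem_accepts_iff (u v : List α) :
    u ++ v ∈ M.accepts ↔ M.evalFrom (M.eval u) v ∈ M.accept := by
  rw [mem_accepts, eval, evalFrom_of_append]

theorem le_langOne_setOf_eval (L : Language α) :
    L ≤ langOne M {q | ∃ w ∈ L, M.eval w = q} :=
  fun w hw => ⟨w, hw, rfl⟩

theorem le_langTwo_setOf_eval {L₁ L₂ : Language α} (h : L₁ * L₂ ≤ M.accepts) :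
    L₂ ≤ langTwo M {q | ∃ w ∈ L₁, M.eval w = q} := by
  rintro v hv _ ⟨u, hu, rfl⟩
  exact (M.append_mem_accepts_iff u v).mp (h (Language.mem_mul.mpr ⟨u, hu, v, hv, rfl⟩))

theorem langOne_mul_langTwo_le_accepts (P : Set σ) :
    langOne M P * langTwo M P ≤ M.accepts := by
  intro w hw
  obtain ⟨u, hu, v, hv, rfl⟩ := Language.mem_mul.mp hw
  exact (M.append_mem_accepts_iff u v).mpr (hv _ hu)

end DFA

/-- If `L(M) = L₁ ⋅ L₂`, and `P` is the set of border states reached by words of `L₁`,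
then `L₁ ⊆ L₁(P)`, `L₂ ⊆ L₂(P)` and `L(M) = L₁(P) ⋅ L₂(P)`. -/
theorem stmt1 {α σ : Type*} (M : DFA α σ) (L₁ L₂ : Language α)
    (h : L₁ * L₂ = M.accepts)
    (P : Set σ) (hP : P = {q | ∃ w ∈ L₁, M.eval w = q}) :
    L₁ ≤ langOne M P ∧ L₂ ≤ langTwo M P ∧
      M.accepts = langOne M P * langTwo M P := by
  subst hP
  have h₁ := M.le_langOne_setOf_eval L₁
  have h₂ := M.le_langTwo_setOf_eval h.le
  exact ⟨h₁, h₂, le_antisymm (h ▸ mul_le_mul' h₁ h₂) (M.langOne_mul_langTwo_le_accepts _)⟩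
end

section
/- Let Σ be an alphabet, Σ' a disjoint copy of Σ with bijection a ↦ a', and $ a fresh symbol not in Σ ∪ Σ'. Let L₁, L₂ be nonempty languages over Σ with primed copies L₁', L₂' over Σ', and let L be a language over Σ with L ≠ ∅ and L ≠ {ε}. Define A = L ∪ L₁$L₂' ∪ L₁'$L₂ ∪ L₁'$$L₂'. If A = A_l · A_r is a decomposition with A_l ≠ {ε} ≠ A_r, then A_l ⊆ Σ* ∪ Σ'*$ and A_r ⊆ Σ* ∪ $Σ'*. -/
/-- The combined alphabet `Σ ∪ Σ' ∪ {$}`: `Sum.inl a` is the plain letter `a`,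
`Sum.inr (Sum.inl a)` is the primed copy `a'`, and `Sum.inr (Sum.inr ())` is `$`. -/
abbrev Alph (α : Type) : Type := α ⊕ (α ⊕ Unit)

/-- plain letter -/
def pl {α : Type} (a : α) : Alph α := Sum.inl a

/-- primed letter -/
def pr {α : Type} (a : α) : Alph α := Sum.inr (Sum.inl a)

/-- the fresh letter `$` -/
def dol {α : Type} : Alph α := Sum.inr (Sum.inr ())

/-- letterwise image of a language over `Σ` -/
def lmap {α : Type} (f : α → Alph α) (L : Language α) : Language (Alph α) :=
  {w | ∃ v ∈ L, w = v.map f}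

/-- `Σ*` : words using only plain letters -/
def plainStar (α : Type) : Language (Alph α) := {w | ∀ c ∈ w, ∃ a, c = pl a}

/-- `Σ'*` : words using only primed letters -/
def primedStar (α : Type) : Language (Alph α) := {w | ∀ c ∈ w, ∃ a, c = pr a}

/-- `A = L ∪ L₁$L₂' ∪ L₁'$L₂ ∪ L₁'$$L₂'` -/
def bigA {α : Type} (L L₁ L₂ : Language α) : Language (Alph α) :=
  lmap pl L ⊔ lmap pl L₁ * {[dol]} * lmap pr L₂ ⊔ lmap pr L₁ * {[dol]} * lmap pl L₂
    ⊔ lmap pr L₁ * {[dol, dol]} * lmap pr L₂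

/-!
Only the shapes of the words of `A` matter: all of them lie in
`Σ* ∪ Σ*$Σ'* ∪ Σ'*$Σ* ∪ Σ'*$$Σ'*` (`bigAShape`), a language closed under reversal.
Fix a factorisation `x₀ y₀` of a word of `L`. A `$`-free word `y` of `A_r` is plain, because
`x₀ y` is `$`-free. Hence no word of `A_l` contains `$` twice: appending a nonempty word of `A_r`
would put that word into `Σ'*`. Splitting a word of `L₁'$$L₂'` therefore produces a word of `A_r`
containing `$`, and followed by it, a word of `A_l` containing `$` must fall into `Σ'*$$Σ'*`;
so its only `$` is its last letter. The claim for `A_r` is the mirror image under reversal.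
-/

namespace List

variable {β : Type*} {a : β}

lemma exists_notMem_eq_append_cons {l : List β} (h : a ∈ l) :
    ∃ r s, a ∉ r ∧ l = r ++ a :: s := by
  classical
  obtain ⟨r, s, hr, rfl, -⟩ := exists_erase_eq h
  exact ⟨r, s, hr, rfl⟩

lemma append_cons_inj_of_notMem_left {r s t q : List β} (hr : a ∉ r) (ht : a ∉ t) :
    r ++ a :: s = t ++ a :: q ↔ r = t ∧ s = q := by
  refine ⟨fun h => ?_, by rintro ⟨rfl, rfl⟩; rfl⟩
  induction r generalizing t with
  | nil =>
    cases t with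
    | nil => simpa using h
    | cons c t =>
      rw [nil_append, cons_append, cons.injEq] at h
      exact absurd (h.1 ▸ mem_cons_self) ht
  | cons b r ih =>
    cases t with
    | nil =>
      rw [nil_append, cons_append, cons.injEq] at h
      exact absurd (h.1 ▸ mem_cons_self) hr
    | cons c t =>
      rw [cons_append, cons_append, cons.injEq] at h
      obtain ⟨rfl, h⟩ := h
      simpa using ih (fun h' => hr (mem_cons_of_mem _ h')) (fun h' => ht (mem_cons_of_mem _ h')) h

lemma duplicate_append_cons_iff_of_notMem {r s : List β} (hr : a ∉ r) :
    Duplicate a (r ++ a :: s) ↔ a ∈ s := by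
  induction r with
  | nil => exact duplicate_cons_self_iff
  | cons b r ih =>
    rw [cons_append, duplicate_cons_iff_of_ne (by rintro rfl; exact hr mem_cons_self)]
    exact ih (fun h => hr (mem_cons_of_mem b h))

lemma mem_right_of_duplicate_append {l₁ l₂ : List β} (h : Duplicate a (l₁ ++ l₂))
    (h₁ : ¬Duplicate a l₁) : a ∈ l₂ := by
  classical
  rw [duplicate_iff_two_le_count, count_append] at h
  rw [duplicate_iff_two_le_count] at h₁
  exact count_pos_iff.1 (by omega)

end List

namespace Language

variable {β : Type*}

@[simp]
lemma reverse_singleton (w : List β) : ({w} : Language β).reverse = {w.reverse} := by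
  ext v
  exact List.reverse_eq_iff

lemma reverse_le_reverse_iff {l m : Language β} : l.reverse ≤ m.reverse ↔ l ≤ m :=
  ⟨fun h _ hw => reverse_mem_reverse.1 (h (reverse_mem_reverse.2 hw)), fun h _ hw => h hw⟩

lemma mem_mul_singleton_mul {l m : Language β} {u w : List β} :
    w ∈ l * {u} * m ↔ ∃ t ∈ l, ∃ q ∈ m, w = t ++ u ++ q := by
  simp only [mem_mul]
  constructor
  · rintro ⟨_, ⟨t, ht, _, rfl, rfl⟩, q, hq, rfl⟩
    exact ⟨t, ht, q, hq, rfl⟩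
  · rintro ⟨t, ht, q, hq, rfl⟩
    exact ⟨_, ⟨t, ht, u, rfl, rfl⟩, q, hq, rfl⟩

lemma exists_ne_nil_of_ne_one {l : Language β} (hne : ∃ w, w ∈ l) (h : l ≠ 1) :
    ∃ w ∈ l, w ≠ [] := by
  by_contra! hl
  obtain ⟨w, hw⟩ := hne
  exact h (Set.eq_singleton_iff_unique_mem.2 ⟨hl w hw ▸ hw, hl⟩)

end Language

section

open Language

variable {α : Type}

lemma dol_notMem_of_mem_plainStar {w : List (Alph α)} (h : w ∈ plainStar α) : dol ∉ w := by
  intro hd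
  obtain ⟨a, ha⟩ := h dol hd
  cases ha

lemma dol_notMem_of_mem_primedStar {w : List (Alph α)} (h : w ∈ primedStar α) : dol ∉ w := by
  intro hd
  obtain ⟨a, ha⟩ := h dol hd
  cases ha

lemma mem_plainStar {w : List (Alph α)} : w ∈ plainStar α ↔ ∀ c ∈ w, ∃ a, c = pl a := Iff.rfl

lemma mem_primedStar {w : List (Alph α)} : w ∈ primedStar α ↔ ∀ c ∈ w, ∃ a, c = pr a := Iff.rfl

lemma append_mem_plainStar_iff {x y : List (Alph α)} :
    x ++ y ∈ plainStar α ↔ x ∈ plainStar α ∧ y ∈ plainStar α := by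
  simp only [mem_plainStar, List.mem_append, or_imp, forall_and]

lemma append_mem_primedStar_iff {x y : List (Alph α)} :
    x ++ y ∈ primedStar α ↔ x ∈ primedStar α ∧ y ∈ primedStar α := by
  simp only [mem_primedStar, List.mem_append, or_imp, forall_and]

lemma eq_nil_of_mem_plainStar_of_mem_primedStar {w : List (Alph α)} (h : w ∈ plainStar α)
    (h' : w ∈ primedStar α) : w = [] := by
  cases w with
  | nil => rfl
  | cons c w =>
    obtain ⟨a, rfl⟩ := h c List.mem_cons_self
    obtain ⟨b, hb⟩ := h' _ List.mem_cons_self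
    cases hb

@[simp]
lemma reverse_plainStar : (plainStar α).reverse = plainStar α := by
  ext w
  simp only [mem_reverse, mem_plainStar, List.mem_reverse]

@[simp]
lemma reverse_primedStar : (primedStar α).reverse = primedStar α := by
  ext w
  simp only [mem_reverse, mem_primedStar, List.mem_reverse]

lemma lmap_pl_le_plainStar (L : Language α) : lmap pl L ≤ plainStar α := by
  rintro _ ⟨v, -, rfl⟩ c hc
  obtain ⟨a, -, rfl⟩ := List.mem_map.1 hc
  exact ⟨a, rfl⟩

lemma lmap_pr_le_primedStar (L : Language α) : lmap pr L ≤ primedStar α := by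
  rintro _ ⟨v, -, rfl⟩ c hc
  obtain ⟨a, -, rfl⟩ := List.mem_map.1 hc
  exact ⟨a, rfl⟩

def bigAShape (α : Type) : Language (Alph α) :=
  plainStar α ⊔ plainStar α * {[dol]} * primedStar α ⊔ primedStar α * {[dol]} * plainStar α
    ⊔ primedStar α * {[dol, dol]} * primedStar α

lemma bigA_le_bigAShape (L L₁ L₂ : Language α) : bigA L L₁ L₂ ≤ bigAShape α := by
  unfold bigA bigAShape
  gcongr
  all_goals first | exact lmap_pl_le_plainStar _ | exact lmap_pr_le_primedStar _

lemma reverse_bigAShape : (bigAShape α).reverse = bigAShape α := by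
  simp only [bigAShape, ← add_eq_sup, reverse_add, reverse_mul, reverse_plainStar,
    reverse_primedStar, reverse_singleton, List.reverse_cons, List.reverse_nil, List.nil_append,
    List.cons_append, mul_assoc]
  abel

lemma mem_bigAShape_iff {w : List (Alph α)} :
    w ∈ bigAShape α ↔ w ∈ plainStar α ∨
      (∃ t ∈ plainStar α, ∃ q ∈ primedStar α, w = t ++ dol :: q) ∨
      (∃ t ∈ primedStar α, ∃ q ∈ plainStar α, w = t ++ dol :: q) ∨
      (∃ t ∈ primedStar α, ∃ q ∈ primedStar α, w = t ++ dol :: dol :: q) := by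
  simp only [bigAShape, ← add_eq_sup, mem_add, mem_mul_singleton_mul, List.append_assoc,
    List.cons_append, List.nil_append, or_assoc]

lemma mem_plainStar_of_mem_bigAShape {w : List (Alph α)} (h : w ∈ bigAShape α) (hw : dol ∉ w) :
    w ∈ plainStar α := by
  rcases mem_bigAShape_iff.1 h with h | ⟨t, -, q, -, rfl⟩ | ⟨t, -, q, -, rfl⟩ | ⟨t, -, q, -, rfl⟩
  · exact h
  all_goals simp at hw

lemma mem_primedStar_and_eq_dol_cons_of_mem_bigAShape {r s : List (Alph α)}
    (h : r ++ dol :: s ∈ bigAShape α) (hr : dol ∉ r) (hs : dol ∈ s) :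
    r ∈ primedStar α ∧ ∃ q ∈ primedStar α, s = dol :: q := by
  rcases mem_bigAShape_iff.1 h with
    h | ⟨t, ht, q, hq, he⟩ | ⟨t, ht, q, hq, he⟩ | ⟨t, ht, q, hq, he⟩
  · exact absurd (by simp) (dol_notMem_of_mem_plainStar h)
  · rw [List.append_cons_inj_of_notMem_left hr (dol_notMem_of_mem_plainStar ht)] at he
    exact absurd (he.2 ▸ hs) (dol_notMem_of_mem_primedStar hq)
  · rw [List.append_cons_inj_of_notMem_left hr (dol_notMem_of_mem_primedStar ht)] at he
    exact absurd (he.2 ▸ hs) (dol_notMem_of_mem_plainStar hq)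
  · rw [List.append_cons_inj_of_notMem_left hr (dol_notMem_of_mem_primedStar ht)] at he
    exact ⟨he.1 ▸ ht, q, hq, he.2⟩

lemma not_duplicate_dol_of_append_mem_bigAShape {x x₀ v : List (Alph α)}
    (hx : x ++ v ∈ bigAShape α) (hx₀ : x₀ ++ v ∈ bigAShape α) (hx₀p : x₀ ∈ plainStar α)
    (hv : v ≠ []) : ¬List.Duplicate dol x := by
  intro h2
  obtain ⟨r, s, hr, rfl⟩ := List.exists_notMem_eq_append_cons h2.mem
  rw [List.duplicate_append_cons_iff_of_notMem hr] at h2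
  rw [List.append_assoc, List.cons_append] at hx
  obtain ⟨-, q, hq, hsv⟩ :=
    mem_primedStar_and_eq_dol_cons_of_mem_bigAShape hx hr (List.mem_append_left v h2)
  have hvPr : v ∈ primedStar α := by
    cases s with
    | nil => simp at h2
    | cons c s =>
      rw [List.cons_append, List.cons.injEq] at hsv
      exact (append_mem_primedStar_iff.1 (hsv.2 ▸ hq)).2
  have hvPl : v ∈ plainStar α := by
    refine (append_mem_plainStar_iff.1 (mem_plainStar_of_mem_bigAShape hx₀ ?_)).2
    simpa [dol_notMem_of_mem_plainStar hx₀p] using dol_notMem_of_mem_primedStar hvPr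
  exact hv (eq_nil_of_mem_plainStar_of_mem_primedStar hvPl hvPr)

lemma mem_primedStar_mul_dol_of_append_mem_bigAShape {x y : List (Alph α)}
    (h : x ++ y ∈ bigAShape α) (hx : ¬List.Duplicate dol x) (hdx : dol ∈ x) (hdy : dol ∈ y) :
    x ∈ primedStar α * {[dol]} := by
  obtain ⟨r, s, hr, rfl⟩ := List.exists_notMem_eq_append_cons hdx
  rw [List.duplicate_append_cons_iff_of_notMem hr] at hx
  rw [List.append_assoc, List.cons_append] at h
  obtain ⟨hrPr, q, -, hsy⟩ :=
    mem_primedStar_and_eq_dol_cons_of_mem_bigAShape h hr (List.mem_append_right s hdy)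
  cases s with
  | nil => exact mem_mul.2 ⟨r, hrPr, [dol], rfl, rfl⟩
  | cons c s =>
    rw [List.cons_append, List.cons.injEq] at hsy
    exact absurd (hsy.1 ▸ List.mem_cons_self) hx

lemma le_plainStar_sup_primedStar_mul_dol {Al Ar : Language (Alph α)}
    (hS : Al * Ar ≤ bigAShape α) (hp : ∃ w ∈ Al * Ar, w ∈ plainStar α)
    (hd : ∃ w ∈ Al * Ar, List.Duplicate dol w) (hv : ∃ v ∈ Ar, v ≠ []) :
    Al ≤ plainStar α ⊔ primedStar α * {[dol]} := by
  have hS' : ∀ x ∈ Al, ∀ y ∈ Ar, x ++ y ∈ bigAShape α := fun x hx y hy => hS ⟨x, hx, y, hy, rfl⟩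
  obtain ⟨_, ⟨x₀, hx₀, y₀, hy₀, rfl⟩, hp⟩ := hp
  obtain ⟨hx₀p, hy₀p⟩ := append_mem_plainStar_iff.1 hp
  obtain ⟨v, hv, hv0⟩ := hv
  have hAl : ∀ x ∈ Al, ¬List.Duplicate dol x := fun x hx =>
    not_duplicate_dol_of_append_mem_bigAShape (hS' x hx v hv) (hS' x₀ hx₀ v hv) hx₀p hv0
  obtain ⟨y, hy, hdy⟩ : ∃ y ∈ Ar, dol ∈ y := by
    obtain ⟨_, ⟨x₁, hx₁, y₁, hy₁, rfl⟩, hd⟩ := hd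
    exact ⟨y₁, hy₁, List.mem_right_of_duplicate_append hd (hAl x₁ hx₁)⟩
  intro x hx
  by_cases hdx : dol ∈ x
  · exact Or.inr
      (mem_primedStar_mul_dol_of_append_mem_bigAShape (hS' x hx y hy) (hAl x hx) hdx hdy)
  · refine Or.inl (append_mem_plainStar_iff.1 (mem_plainStar_of_mem_bigAShape (hS' x hx y₀ hy₀)
      (by simpa [hdx] using dol_notMem_of_mem_plainStar hy₀p))).1

lemma le_plainStar_sup_dol_mul_primedStar {Al Ar : Language (Alph α)}
    (hS : Al * Ar ≤ bigAShape α) (hp : ∃ w ∈ Al * Ar, w ∈ plainStar α)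
    (hd : ∃ w ∈ Al * Ar, List.Duplicate dol w) (hu : ∃ u ∈ Al, u ≠ []) :
    Ar ≤ plainStar α ⊔ {[dol]} * primedStar α := by
  rw [← reverse_le_reverse_iff]
  convert le_plainStar_sup_primedStar_mul_dol (Al := Ar.reverse) (Ar := Al.reverse)
    ?_ ?_ ?_ ?_ using 1
  · simp [← add_eq_sup, reverse_add, reverse_mul]
  · rw [← reverse_mul, ← reverse_bigAShape]
    exact fun _ h => hS h
  · obtain ⟨w, hw, hwp⟩ := hp
    refine ⟨w.reverse, ?_, ?_⟩
    · rwa [← reverse_mul, reverse_mem_reverse]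
    · rwa [← reverse_plainStar, reverse_mem_reverse]
  · obtain ⟨w, hw, hwd⟩ := hd
    refine ⟨w.reverse, ?_, List.duplicate_iff_sublist.2 (List.duplicate_iff_sublist.1 hwd).reverse⟩
    rwa [← reverse_mul, reverse_mem_reverse]
  · obtain ⟨u, hu, hu0⟩ := hu
    exact ⟨u.reverse, by rwa [reverse_mem_reverse], by simpa using hu0⟩

end

theorem stmt6_general {α : Type} (L L₁ L₂ : Language α)
    (h1 : L₁ ≠ 0) (h2 : L₂ ≠ 0) (hL : L ≠ 0)
    (Al Ar : Language (Alph α)) (hA : Al * Ar = bigA L L₁ L₂)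
    (hl : Al ≠ 1) (hr : Ar ≠ 1) :
    Al ≤ plainStar α ⊔ primedStar α * {[dol]} ∧
    Ar ≤ plainStar α ⊔ ({[dol]} : Language (Alph α)) * primedStar α := by
  obtain ⟨w, hw⟩ := Set.nonempty_iff_ne_empty.2 hL
  obtain ⟨w₁, hw₁⟩ := Set.nonempty_iff_ne_empty.2 h1
  obtain ⟨w₂, hw₂⟩ := Set.nonempty_iff_ne_empty.2 h2
  have hS : Al * Ar ≤ bigAShape α := hA ▸ bigA_le_bigAShape L L₁ L₂
  have hpA : w.map pl ∈ Al * Ar := hA ▸ Or.inl (Or.inl (Or.inl ⟨w, hw, rfl⟩))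
  have hp : ∃ u ∈ Al * Ar, u ∈ plainStar α := ⟨_, hpA, lmap_pl_le_plainStar L ⟨w, hw, rfl⟩⟩
  have hd : ∃ u ∈ Al * Ar, List.Duplicate dol u :=
    ⟨w₁.map pr ++ [dol, dol] ++ w₂.map pr,
      hA ▸ Or.inr (Language.mem_mul_singleton_mul.2 ⟨_, ⟨w₁, hw₁, rfl⟩, _, ⟨w₂, hw₂, rfl⟩, rfl⟩),
      List.duplicate_iff_sublist.2 (List.infix_append _ _ _).sublist⟩
  obtain ⟨x₀, hx₀, y₀, hy₀, -⟩ := Language.mem_mul.1 hpA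
  exact ⟨le_plainStar_sup_primedStar_mul_dol hS hp hd
      (Language.exists_ne_nil_of_ne_one ⟨_, hy₀⟩ hr),
    le_plainStar_sup_dol_mul_primedStar hS hp hd (Language.exists_ne_nil_of_ne_one ⟨_, hx₀⟩ hl)⟩

/-- In any non-trivial decomposition `A = A_l ⋅ A_r`, one has
`A_l ⊆ Σ* ∪ Σ'*$` and `A_r ⊆ Σ* ∪ $Σ'*`. -/
theorem stmt6 {α : Type} (L L₁ L₂ : Language α)
    (h1 : L₁ ≠ 0) (h2 : L₂ ≠ 0) (hL : L ≠ 0) (hLe : L ≠ 1)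
    (Al Ar : Language (Alph α)) (hA : Al * Ar = bigA L L₁ L₂)
    (hl : Al ≠ 1) (hr : Ar ≠ 1) :
    Al ≤ plainStar α ⊔ primedStar α * {[dol]} ∧
    Ar ≤ plainStar α ⊔ ({[dol]} : Language (Alph α)) * primedStar α :=
  stmt6_general L L₁ L₂ h1 h2 hL Al Ar hA hl hr
end

section
/- With A as below and A₁ := L₁ ∪ L₁'$, A₂ := L₂ ∪ $L₂': if L = L₁L₂ then A = A₁ · A₂. -/
theorem Language.sup_eq_add {β : Type*} (l m : Language β) : l ⊔ m = l + m := rfl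

theorem Language.singleton_mul_singleton {β : Type*} (x y : List β) :
    ({x} * {y} : Language β) = {x ++ y} :=
  Set.image2_singleton

theorem lmap_eq_map {α : Type} (f : α → Alph α) (L : Language α) :
    lmap f L = Language.map f L := by
  ext w
  exact exists_congr fun v => and_congr_right fun _ => eq_comm

/-- If `L = L₁L₂` then `A = A₁ ⋅ A₂` where `A₁ = L₁ ∪ L₁'$` and `A₂ = L₂ ∪ $L₂'`. -/
theorem stmt9 {α : Type} (L L₁ L₂ : Language α) (h : L = L₁ * L₂) :
    bigA L L₁ L₂ =
      (lmap pl L₁ ⊔ lmap pr L₁ * {[dol]}) *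
        (lmap pl L₂ ⊔ ({[dol]} : Language (Alph α)) * lmap pr L₂) := by
  have hdd : ({[dol, dol]} : Language (Alph α)) = {[dol]} * {[dol]} :=
    (Language.singleton_mul_singleton [dol] [dol]).symm
  rw [bigA, h, hdd]
  -- `lmap f` is the semiring map `Language.map f`; expanding the product gives the four summands.
  simp only [lmap_eq_map, map_mul, Language.sup_eq_add, add_mul, mul_add, mul_assoc]
  abel
end

section
/- Let (Θ, H, V, n) be a relation-tiling instance and define, over the alphabet Θ × [1,n²]: L₁ = {(t₁,1)(t₂,2)…(t_m,m) | m ≤ n²−2}, L₂ = the set of words (t_m,m)(t_{m+1},m+1)…(t_{n²},n²) such that either (m ∉ nℤ, m ≤ n², and (t_m,t_{m+1}) ∉ H) or (m ≤ n²−n and (t_m,t_{m+n}) ∉ V), and L = L₁L₂ ∪ {(t₁,1)(t₂,2)…(t_{n²},n²)}. Then L = L₁L₂ if and only if there is no legal tiling, i.e., no T : [1,n²] → Θ with (T(m),T(m+1)) ∈ H for all 1 ≤ m < n² with m ∉ nℤ, and (T(m),T(m+n)) ∈ V for all 1 ≤ m ≤ n²−n. -/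
/-- The word `(t_a, a)(t_{a+1}, a+1) … (t_b, b)` over the alphabet `Θ × ℕ`
(empty if `b + 1 ≤ a`). -/
def seg {Θ : Type} (t : ℕ → Θ) (a b : ℕ) : List (Θ × ℕ) :=
  (List.range (b + 1 - a)).map fun i => (t (a + i), a + i)

/-- `L₁ = {(t₁,1)…(t_m,m) | m ≤ n² - 2}`. -/
def tilingL1 (Θ : Type) (n : ℕ) : Language (Θ × ℕ) :=
  {w | ∃ (t : ℕ → Θ) (m : ℕ), m ≤ n ^ 2 - 2 ∧ w = seg t 1 m}

/-- `L₂`: words `(t_m,m)…(t_{n²},n²)` with a horizontal fault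
(`m ∉ nℤ`, `m ≤ n²`, `(t_m,t_{m+1}) ∉ H`) or a vertical fault
(`m ≤ n² - n`, `(t_m,t_{m+n}) ∉ V`). -/
def tilingL2 {Θ : Type} (H V : Set (Θ × Θ)) (n : ℕ) : Language (Θ × ℕ) :=
  {w | ∃ (t : ℕ → Θ) (m : ℕ), 1 ≤ m ∧ w = seg t m (n ^ 2) ∧
      ((m ≤ n ^ 2 ∧ ¬ n ∣ m ∧ (t m, t (m + 1)) ∉ H) ∨
       (m ≤ n ^ 2 - n ∧ (t m, t (m + n)) ∉ V))}

/-- The full correctly-numbered words `(t₁,1)…(t_{n²},n²)`. -/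
def tilingFull (Θ : Type) (n : ℕ) : Language (Θ × ℕ) :=
  {w | ∃ t : ℕ → Θ, w = seg t 1 (n ^ 2)}

/-!
`L = L₁L₂` says that every full word `(T 1, 1)…(T n², n²)` lies in `L₁L₂`. In a factorisation
`uv` of a full word with `v ∈ L₂` starting at position `m`, the length of `v` forces it to be the
suffix of the full word from `m`, so the full word lies in `L₁L₂` exactly when `T` violates a
constraint at some `m`; conversely such a violation is split off as `v`.
-/

section Tiling

variable {Θ : Type}

lemma seg_append (t : ℕ → Θ) {a b c : ℕ} (hab : a ≤ b + 1) (hbc : b ≤ c) :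
    seg t a b ++ seg t (b + 1) c = seg t a c := by
  unfold seg
  rw [show c + 1 - a = (b + 1 - a) + (c + 1 - (b + 1)) by omega, List.range_add, List.map_append,
    List.map_map]
  congr 1
  refine List.map_congr_left fun i _ => ?_
  simp only [Function.comp, show a + (b + 1 - a + i) = b + 1 + i by omega]

lemma seg_eq_seg_iff {t T : ℕ → Θ} {a b : ℕ} :
    seg t a b = seg T a b ↔ ∀ k, a ≤ k → k ≤ b → t k = T k := by
  simp only [seg, List.map_inj_left, List.mem_range, Prod.mk.injEq, and_true]
  constructor
  · intro h k hak hkb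
    simpa [Nat.add_sub_cancel' hak] using h (k - a) (by omega)
  · intro h i hi
    exact h (a + i) (by omega) (by omega)

lemma eq_on_of_append_seg_eq_seg {t T : ℕ → Θ} {w : List (Θ × ℕ)} {a m b : ℕ}
    (h : w ++ seg t m b = seg T a b) (ha : 0 < a) (ham : a ≤ m) (hmb : m ≤ b + 1) :
    ∀ k, m ≤ k → k ≤ b → t k = T k := by
  rw [← seg_append T (a := a) (b := m - 1) (c := b) (by omega) (by omega),
    Nat.sub_add_cancel (by omega : 1 ≤ m)] at h
  exact seg_eq_seg_iff.mp (List.append_inj' h (by simp only [seg, List.length_map])).2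

/-- `T` restricted to `[1, n²]`, read as the `n × n` square in row-major order, is a legal tiling. -/
def IsLegalTiling (H V : Set (Θ × Θ)) (n : ℕ) (T : ℕ → Θ) : Prop :=
  (∀ m, 1 ≤ m → m < n ^ 2 → ¬ n ∣ m → (T m, T (m + 1)) ∈ H) ∧
    (∀ m, 1 ≤ m → m ≤ n ^ 2 - n → (T m, T (m + n)) ∈ V)

/-- The fault condition in the definition of `tilingL2`. -/
def HasFaultAt (H V : Set (Θ × Θ)) (n : ℕ) (t : ℕ → Θ) (m : ℕ) : Prop :=
  (m ≤ n ^ 2 ∧ ¬ n ∣ m ∧ (t m, t (m + 1)) ∉ H) ∨ (m ≤ n ^ 2 - n ∧ (t m, t (m + n)) ∉ V)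

variable {H V : Set (Θ × Θ)} {n : ℕ}

lemma lt_sq_of_not_dvd {m : ℕ} (hm : m ≤ n ^ 2) (hdvd : ¬ n ∣ m) : m < n ^ 2 :=
  lt_of_le_of_ne hm fun h => hdvd (h ▸ Dvd.intro n (sq n).symm)

lemma HasFaultAt.lt_sq {t : ℕ → Θ} {m : ℕ} (h : HasFaultAt H V n t m) (hm : 1 ≤ m) :
    m < n ^ 2 := by
  rcases h with ⟨hle, hdvd, -⟩ | ⟨hle, -⟩
  · exact lt_sq_of_not_dvd hle hdvd
  · have hn : 0 < n := Nat.pos_of_ne_zero (by rintro rfl; omega)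
    have : n ≤ n ^ 2 := Nat.le_self_pow two_ne_zero n
    omega

lemma HasFaultAt.congr {t T : ℕ → Θ} {m : ℕ} (h : HasFaultAt H V n t m)
    (htT : ∀ k, m ≤ k → k ≤ n ^ 2 → t k = T k) : HasFaultAt H V n T m := by
  rcases h with ⟨hle, hdvd, hH⟩ | ⟨hle, hV⟩
  · have := lt_sq_of_not_dvd hle hdvd
    rw [htT m le_rfl hle, htT (m + 1) (by omega) this] at hH
    exact Or.inl ⟨hle, hdvd, hH⟩
  · have hmn : m + n ≤ n ^ 2 := by
      have : n ≤ n ^ 2 := Nat.le_self_pow two_ne_zero n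
      omega
    rw [htT m le_rfl (by omega), htT (m + n) (by omega) hmn] at hV
    exact Or.inr ⟨hle, hV⟩

lemma not_isLegalTiling_iff {T : ℕ → Θ} :
    ¬ IsLegalTiling H V n T ↔ ∃ m, 1 ≤ m ∧ HasFaultAt H V n T m := by
  constructor
  · intro h
    simp only [IsLegalTiling, not_and_or, not_forall] at h
    rcases h with ⟨m, hm, hlt, hdvd, hH⟩ | ⟨m, hm, hle, hV⟩
    · exact ⟨m, hm, Or.inl ⟨hlt.le, hdvd, hH⟩⟩
    · exact ⟨m, hm, Or.inr ⟨hle, hV⟩⟩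
  · rintro ⟨m, hm, (⟨hle, hdvd, hH⟩ | ⟨hle, hV⟩)⟩ ⟨hHall, hVall⟩
    · exact hH (hHall m hm (lt_sq_of_not_dvd hle hdvd) hdvd)
    · exact hV (hVall m hm hle)

lemma seg_mem_tilingL1_mul_tilingL2_iff {T : ℕ → Θ} :
    seg T 1 (n ^ 2) ∈ tilingL1 Θ n * tilingL2 H V n ↔ ∃ m, 1 ≤ m ∧ HasFaultAt H V n T m := by
  rw [Language.mem_mul]
  constructor
  · rintro ⟨_, -, _, ⟨t, m, hm, rfl, (hfault : HasFaultAt H V n t m)⟩, hw⟩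
    exact ⟨m, hm, hfault.congr
      (eq_on_of_append_seg_eq_seg hw one_pos hm (Nat.le_succ_of_le (hfault.lt_sq hm).le))⟩
  · rintro ⟨m, hm, hfault⟩
    have hlt := hfault.lt_sq hm
    refine ⟨seg T 1 (m - 1), ⟨T, m - 1, by omega, rfl⟩, seg T m (n ^ 2),
      ⟨T, m, hm, rfl, hfault⟩, ?_⟩
    simpa only [Nat.sub_add_cancel hm] using seg_append T (a := 1) (b := m - 1) (c := n ^ 2)
      (by omega) (by omega)

end Tiling

/-- With `L = L₁L₂ ∪ {(t₁,1)…(t_{n²},n²)}`, one has `L = L₁L₂` iff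
there is no legal tiling. -/
theorem stmt12 {Θ : Type} (H V : Set (Θ × Θ)) (n : ℕ) :
    tilingL1 Θ n * tilingL2 H V n ⊔ tilingFull Θ n = tilingL1 Θ n * tilingL2 H V n ↔
      ¬ ∃ T : ℕ → Θ,
          (∀ m, 1 ≤ m → m < n ^ 2 → ¬ n ∣ m → (T m, T (m + 1)) ∈ H) ∧
          (∀ m, 1 ≤ m → m ≤ n ^ 2 - n → (T m, T (m + n)) ∈ V) := by
  change _ ↔ ¬ ∃ T, IsLegalTiling H V n T
  rw [sup_eq_left, not_exists]
  constructor
  · intro hsub T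
    exact not_isLegalTiling_iff.mpr (seg_mem_tilingL1_mul_tilingL2_iff.mp (hsub ⟨T, rfl⟩))
  · rintro hT - ⟨T, rfl⟩
    exact seg_mem_tilingL1_mul_tilingL2_iff.mpr (not_isLegalTiling_iff.mp (hT T))
end

section
/- With L₁, L₂ as in the tiling reduction, every word in {(t₁,1)(t₂,2)…(t_{n²},n²) | t_i ∈ Θ} ∩ L₁L₂ corresponds to a function T : [1,n²] → Θ, T(j) = t_j, that violates at least one of the tiling constraints (some m with m ∉ nℤ and (t_m,t_{m+1}) ∉ H, or some m ≤ n²−n with (t_m,t_{m+n}) ∉ V). -/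
section Seg

variable {Θ : Type}

@[simp]
lemma seg_length (t : ℕ → Θ) (a b : ℕ) : (seg t a b).length = b + 1 - a := by
  simp [seg]

lemma seg_getElem? (t : ℕ → Θ) {a b i : ℕ} (hi : i < b + 1 - a) :
    (seg t a b)[i]? = some (t (a + i), a + i) := by
  simp [seg, List.getElem?_range hi]

lemma eq_of_append_seg_eq {u : List (Θ × ℕ)} {s t : ℕ → Θ} {a m b k : ℕ}
    (h : u ++ seg s m b = seg t a b) (hmk : m ≤ k) (hkb : k ≤ b) : s k = t k := by
  have hlen : u.length + (b + 1 - m) = b + 1 - a := by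
    simpa using congrArg List.length h
  have hk : (u ++ seg s m b)[u.length + (k - m)]? = some (s k, k) := by
    rw [List.getElem?_append_right (Nat.le_add_right _ _), Nat.add_sub_cancel_left,
      seg_getElem? s (by omega), Nat.add_sub_cancel' hmk]
  rw [h, seg_getElem? t (by omega), Option.some.injEq, Prod.mk.injEq] at hk
  obtain ⟨hval, hpos⟩ := hk
  rwa [hpos, eq_comm] at hval

end Seg

lemma tiling_fault_of_append_mem_tilingL2 {Θ : Type} {H V : Set (Θ × Θ)} {n : ℕ}
    {t : ℕ → Θ} {u v : List (Θ × ℕ)} (hv : v ∈ tilingL2 H V n)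
    (huv : u ++ v = seg t 1 (n ^ 2)) :
    (∃ m, 1 ≤ m ∧ m ≤ n ^ 2 ∧ ¬ n ∣ m ∧ (t m, t (m + 1)) ∉ H) ∨
      (∃ m, 1 ≤ m ∧ m ≤ n ^ 2 - n ∧ (t m, t (m + n)) ∉ V) := by
  obtain ⟨s, m, hm, rfl, ⟨hmN, hdvd, hH⟩ | ⟨hmN, hV⟩⟩ := hv
  · have hm_ne : m ≠ n ^ 2 := by
      rintro rfl
      exact hdvd (dvd_pow_self n two_ne_zero)
    rw [eq_of_append_seg_eq huv le_rfl hmN,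
      eq_of_append_seg_eq huv (Nat.le_succ m) (by omega)] at hH
    exact Or.inl ⟨m, hm, hmN, hdvd, hH⟩
  · rw [eq_of_append_seg_eq huv le_rfl (by omega),
      eq_of_append_seg_eq huv (Nat.le_add_right m n) (by omega)] at hV
    exact Or.inr ⟨m, hm, hmN, hV⟩

/-- Every full correctly-numbered word lying in `L₁L₂` corresponds to a tiling
that violates one of the constraints. -/
theorem stmt13 {Θ : Type} (H V : Set (Θ × Θ)) (n : ℕ) :
    ∀ t : ℕ → Θ, seg t 1 (n ^ 2) ∈ tilingL1 Θ n * tilingL2 H V n →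
      (∃ m, 1 ≤ m ∧ m ≤ n ^ 2 ∧ ¬ n ∣ m ∧ (t m, t (m + 1)) ∉ H) ∨
      (∃ m, 1 ≤ m ∧ m ≤ n ^ 2 - n ∧ (t m, t (m + n)) ∉ V) := by
  intro t hmem
  obtain ⟨u, -, v, hv, huv⟩ := Language.mem_mul.mp hmem
  exact tiling_fault_of_append_mem_tilingL2 hv huv
end
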